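/- Let B be a C*-algebra which has the completely bounded approximation property with constant ≤ C, and let D be a norm-dense linear subspace of B. Then there exists a net (ρ_j) of completely bounded finite-rank linear maps on B such that the range of each ρ_j is contained in D, ‖ρ_j‖_cb ≤ C for all j, and ‖ρ_j(b) − b‖ → 0 for every b ∈ B. -/

import Mathlib

open Filter
open scoped ENNReal

set_option linter.unusedSectionVars false
set_option maxHeartbeats 1000000
set_option synthInstance.maxHeartbeats 400000

noncomputable section

namespace CP

/-- The operator on the ℓ²-direct sum `Kⁿ` induced by an `n × n` matrix of operators on `K`;
its operator norm is the C*-norm of the matrix as an element of `Mₙ(B(K))`. -/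
def matOp {K : Type*} [NormedAddCommGroup K] [InnerProductSpace ℂ K]
    {n : ℕ} (M : Matrix (Fin n) (Fin n) (K →L[ℂ] K)) :
    (PiLp 2 fun _ : Fin n => K) →L[ℂ] (PiLp 2 fun _ : Fin n => K) :=
  ((PiLp.continuousLinearEquiv 2 ℂ (fun _ : Fin n => K)).symm.toContinuousLinearMap).comp
    ((ContinuousLinearMap.pi fun p => ∑ q, (M p q).comp (ContinuousLinearMap.proj q)).comp
      ((PiLp.continuousLinearEquiv 2 ℂ (fun _ : Fin n => K)).toContinuousLinearMap))

/-- The linear map `S` is completely bounded on `D ⊆ B(K)` with cb-norm at most `C`: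
for every `n` and every `n × n` matrix with entries in `D`, the entrywise application of
`S` increases the norm in `Mₙ(B(K))` by a factor of at most `C`. -/
def CBBoundOn {K : Type*} [NormedAddCommGroup K] [InnerProductSpace ℂ K]
    (D : Set (K →L[ℂ] K)) (S : (K →L[ℂ] K) →ₗ[ℂ] (K →L[ℂ] K)) (C : ℝ) : Prop :=
  ∀ (n : ℕ) (M : Matrix (Fin n) (Fin n) (K →L[ℂ] K)),
    (∀ p q, M p q ∈ D) → ‖matOp (M.map S)‖ ≤ C * ‖matOp M‖

/-- A map `φ` on a (star-)subalgebra `A ⊆ B(H)` is completely bounded with cb-norm ≤ `C`. -/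
def CBBoundOnSub {H : Type*} [NormedAddCommGroup H] [InnerProductSpace ℂ H] [CompleteSpace H]
    (A : StarSubalgebra ℂ (H →L[ℂ] H)) (φ : A → A) (C : ℝ) : Prop :=
  ∀ (n : ℕ) (M : Matrix (Fin n) (Fin n) (H →L[ℂ] H)) (hM : ∀ p q, M p q ∈ A),
    ‖matOp (fun p q => (φ ⟨M p q, hM p q⟩ : H →L[ℂ] H))‖ ≤ C * ‖matOp M‖

/-- `ℓ²(G, H)`, the Hilbert space of square-summable `H`-valued families indexed by `G`. -/
abbrev L2 (G : Type*) (H : Type*) [NormedAddCommGroup H] [InnerProductSpace ℂ H] : Type _ :=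
  lp (fun _ : G => H) 2

variable {G : Type*} [Group G] {H : Type*} [NormedAddCommGroup H] [InnerProductSpace ℂ H]
  [CompleteSpace H]

/-- The reduced crossed product `A ⋊_r G`: the norm closure in `B(ℓ²(G,H))` of the linear
span of the operators `π(a) λ_t`. -/
def redCP (A : StarSubalgebra ℂ (H →L[ℂ] H))
    (π : A → (L2 G H →L[ℂ] L2 G H)) (lam : G → (L2 G H →L[ℂ] L2 G H)) :
    Set (L2 G H →L[ℂ] L2 G H) :=
  closure (Submodule.span ℂ {T | ∃ (a : A) (t : G), T = (π a).comp (lam t)} : Set _)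

/-- `F : G → B(A)` is a Herz–Schur `(A,G,α)`-multiplier with `‖F‖_HS ≤ C`. -/
def IsHSMultWith (A : StarSubalgebra ℂ (H →L[ℂ] H))
    (π : A → (L2 G H →L[ℂ] L2 G H)) (lam : G → (L2 G H →L[ℂ] L2 G H))
    (F : G → (A →L[ℂ] A)) (C : ℝ) : Prop :=
  ∃ S : (L2 G H →L[ℂ] L2 G H) →ₗ[ℂ] (L2 G H →L[ℂ] L2 G H),
    Set.MapsTo S (redCP A π lam) (redCP A π lam) ∧
    CBBoundOn (redCP A π lam) S C ∧
    ∀ (a : A) (t : G), S ((π a).comp (lam t)) = (π (F t a)).comp (lam t)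

/-- Weak amenability of the system `(A,G,α)` with constant ≤ `K`: a net of finitely
supported Herz–Schur multipliers, of finite-rank maps, with `‖F_i‖_HS ≤ K`, converging
pointwise in norm to the identity. -/
def SysWAWith (A : StarSubalgebra ℂ (H →L[ℂ] H))
    (π : A → (L2 G H →L[ℂ] L2 G H)) (lam : G → (L2 G H →L[ℂ] L2 G H)) (K : ℝ) : Prop :=
  ∃ (ι : Type) (pι : Preorder ι), Nonempty ι ∧
    (∀ i j : ι, ∃ k, pι.le i k ∧ pι.le j k) ∧
    ∃ F : ι → G → (A →L[ℂ] A),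
      (∀ i, (Function.support (F i)).Finite) ∧
      (∀ i, IsHSMultWith A π lam (F i) K) ∧
      (∀ i t, FiniteDimensional ℂ (LinearMap.range (F i t).toLinearMap)) ∧
      (∀ (t : G) (a : A), Filter.Tendsto (fun i => F i t a) (@Filter.atTop ι pι) (nhds a))

/-- The subset `D ⊆ B(K)` (a C*-algebra) has the completely bounded approximation
property with constant ≤ `C`. -/
def CBAPWith {K : Type*} [NormedAddCommGroup K] [InnerProductSpace ℂ K]
    (D : Set (K →L[ℂ] K)) (C : ℝ) : Prop :=
  ∃ (ι : Type) (pι : Preorder ι), Nonempty ι ∧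
    (∀ i j : ι, ∃ k, pι.le i k ∧ pι.le j k) ∧
    ∃ T : ι → ((K →L[ℂ] K) →ₗ[ℂ] (K →L[ℂ] K)),
      (∀ i, Set.MapsTo (T i) D D) ∧
      (∀ i, FiniteDimensional ℂ (Submodule.span ℂ (T i '' D))) ∧
      (∀ i, CBBoundOn D (T i) C) ∧
      (∀ x ∈ D, Filter.Tendsto (fun i => T i x) (@Filter.atTop ι pι) (nhds x))

/-- The reduced group C*-algebra `C*_r(G) ⊆ B(ℓ²(G))`: closure of the span of the
left translations. -/
def grpCstar (lamG : G → (L2 G ℂ →L[ℂ] L2 G ℂ)) : Set (L2 G ℂ →L[ℂ] L2 G ℂ) :=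
  closure (Submodule.span ℂ (Set.range lamG) : Set _)

/-- `u : G → ℂ` is a Herz–Schur multiplier of `G` with cb-norm ≤ `C`. -/
def IsGrpMultWith (lamG : G → (L2 G ℂ →L[ℂ] L2 G ℂ)) (u : G → ℂ) (C : ℝ) : Prop :=
  ∃ S : (L2 G ℂ →L[ℂ] L2 G ℂ) →ₗ[ℂ] (L2 G ℂ →L[ℂ] L2 G ℂ),
    Set.MapsTo S (grpCstar lamG) (grpCstar lamG) ∧
    CBBoundOn (grpCstar lamG) S C ∧
    ∀ t : G, S (lamG t) = u t • lamG t

/-- The group `G` is weakly amenable with constant ≤ `C`. -/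
def GrpWAWith (lamG : G → (L2 G ℂ →L[ℂ] L2 G ℂ)) (C : ℝ) : Prop :=
  ∃ (ι : Type) (pι : Preorder ι), Nonempty ι ∧
    (∀ i j : ι, ∃ k, pι.le i k ∧ pι.le j k) ∧
    ∃ u : ι → G → ℂ,
      (∀ i, (Function.support (u i)).Finite) ∧
      (∀ i, IsGrpMultWith lamG (u i) C) ∧
      (∀ t : G, Filter.Tendsto (fun i => u i t) (@Filter.atTop ι pι) (nhds 1))

section Helpers
variable {K : Type*} [NormedAddCommGroup K] [InnerProductSpace ℂ K]

lemma matOp_apply {n : ℕ} (M : Matrix (Fin n) (Fin n) (K →L[ℂ] K))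
    (x : PiLp 2 fun _ : Fin n => K) (p : Fin n) :
    matOp M x p = ∑ q, M p q (x q) := by
  simp [matOp, ContinuousLinearMap.sum_apply]

lemma pilp_norm_sq {n : ℕ} (x : PiLp 2 fun _ : Fin n => K) :
    ‖x‖ ^ 2 = ∑ p, ‖x p‖ ^ 2 := PiLp.norm_sq_eq_of_L2 _ x

lemma pilp_norm_eq {n : ℕ} (x : PiLp 2 fun _ : Fin n => K) :
    ‖x‖ = Real.sqrt (∑ p, ‖x p‖ ^ 2) := by
  rw [← pilp_norm_sq, Real.sqrt_sq (norm_nonneg x)]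

/-- Cauchy–Schwarz for finite real sums. -/
lemma cs_sum {n : ℕ} (f g : Fin n → ℝ) (hf : ∀ p, 0 ≤ f p) (hg : ∀ p, 0 ≤ g p) :
    ∑ p, f p * g p ≤ Real.sqrt (∑ p, f p ^ 2) * Real.sqrt (∑ p, g p ^ 2) := by
  have h := Finset.sum_mul_sq_le_sq_mul_sq Finset.univ f g
  have h1 : (0:ℝ) ≤ ∑ p, f p * g p :=
    Finset.sum_nonneg fun p _ => mul_nonneg (hf p) (hg p)
  have := Real.sqrt_le_sqrt h
  rwa [Real.sqrt_sq h1, Real.sqrt_mul (Finset.sum_nonneg fun p _ => sq_nonneg (f p))] at this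

/-- Norm bound for scalar combinations `∑ conj(u p) v q • M p q`. -/
lemma comb_norm_le {n : ℕ} (M : Matrix (Fin n) (Fin n) (K →L[ℂ] K)) (u v : Fin n → ℂ) :
    ‖∑ p, ∑ q, ((starRingEnd ℂ) (u p) * v q) • M p q‖ ≤
      ‖matOp M‖ * (Real.sqrt (∑ p, ‖u p‖ ^ 2) * Real.sqrt (∑ q, ‖v q‖ ^ 2)) := by
  refine ContinuousLinearMap.opNorm_le_bound _
    (by positivity) fun w => ?_
  set η : PiLp 2 (fun _ : Fin n => K) := (WithLp.equiv 2 _).symm (fun q => v q • w) with hη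
  have hηq : ∀ q, η q = v q • w := fun q => rfl
  have happ : (∑ p, ∑ q, ((starRingEnd ℂ) (u p) * v q) • M p q) w
      = ∑ p, (starRingEnd ℂ) (u p) • (matOp M η p) := by
    simp only [ContinuousLinearMap.sum_apply, ContinuousLinearMap.smul_apply, matOp_apply,
      hηq, Finset.smul_sum, map_smul, smul_smul]
  rw [happ]
  have h1 : ‖∑ p, (starRingEnd ℂ) (u p) • (matOp M η p)‖ ≤ ∑ p, ‖u p‖ * ‖matOp M η p‖ := by
    refine (norm_sum_le _ _).trans (le_of_eq ?_)
    refine Finset.sum_congr rfl fun p _ => ?_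
    rw [norm_smul, RCLike.norm_conj]
  have h2 : ∑ p, ‖u p‖ * ‖matOp M η p‖ ≤
      Real.sqrt (∑ p, ‖u p‖ ^ 2) * Real.sqrt (∑ p, ‖matOp M η p‖ ^ 2) :=
    cs_sum _ _ (fun p => norm_nonneg _) (fun p => norm_nonneg _)
  have h3 : Real.sqrt (∑ p, ‖matOp M η p‖ ^ 2) = ‖matOp M η‖ := (pilp_norm_eq _).symm
  have h4 : ‖matOp M η‖ ≤ ‖matOp M‖ * ‖η‖ := (matOp M).le_opNorm η
  have h5 : ‖η‖ = Real.sqrt (∑ q, ‖v q‖ ^ 2) * ‖w‖ := by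
    rw [pilp_norm_eq]
    have : ∀ q, ‖η q‖ ^ 2 = ‖v q‖ ^ 2 * ‖w‖ ^ 2 := by
      intro q; rw [hηq, norm_smul, mul_pow]
    rw [Finset.sum_congr rfl fun q _ => this q, ← Finset.sum_mul,
      Real.sqrt_mul (Finset.sum_nonneg fun q _ => sq_nonneg _), Real.sqrt_sq (norm_nonneg w)]
  calc ‖∑ p, (starRingEnd ℂ) (u p) • (matOp M η p)‖
      ≤ Real.sqrt (∑ p, ‖u p‖ ^ 2) * ‖matOp M η‖ := h1.trans (h2.trans_eq (by rw [h3]))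
    _ ≤ Real.sqrt (∑ p, ‖u p‖ ^ 2) * (‖matOp M‖ * (Real.sqrt (∑ q, ‖v q‖ ^ 2) * ‖w‖)) := by
        refine mul_le_mul_of_nonneg_left ?_ (Real.sqrt_nonneg _)
        rw [← h5]; exact h4
    _ = ‖matOp M‖ * (Real.sqrt (∑ p, ‖u p‖ ^ 2) * Real.sqrt (∑ q, ‖v q‖ ^ 2)) * ‖w‖ := by ring


lemma scalar_bound {n : ℕ} (c : Fin n → Fin n → ℂ) (β : ℝ) (hβ : 0 ≤ β)
    (h : ∀ u v : Fin n → ℂ, ‖∑ p, ∑ q, ((starRingEnd ℂ) (u p) * v q) * c p q‖ ≤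
      β * (Real.sqrt (∑ p, ‖u p‖ ^ 2) * Real.sqrt (∑ q, ‖v q‖ ^ 2)))
    (v : Fin n → ℂ) :
    ∑ p, ‖∑ q, c p q * v q‖ ^ 2 ≤ β ^ 2 * ∑ q, ‖v q‖ ^ 2 := by
  set w : Fin n → ℂ := fun p => ∑ q, c p q * v q with hw
  set A : ℝ := ∑ p, ‖w p‖ ^ 2 with hA
  have hA0 : 0 ≤ A := Finset.sum_nonneg fun p _ => sq_nonneg _
  have hkey : (∑ p, ∑ q, ((starRingEnd ℂ) (w p) * v q) * c p q) = (A : ℂ) := by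
    have : ∀ p, ∑ q, ((starRingEnd ℂ) (w p) * v q) * c p q
        = (starRingEnd ℂ) (w p) * w p := by
      intro p
      rw [hw, Finset.mul_sum]
      exact Finset.sum_congr rfl fun q _ => by ring
    rw [Finset.sum_congr rfl fun p _ => this p, hA]
    push_cast
    exact Finset.sum_congr rfl fun p _ => RCLike.conj_mul (w p)
  have h2 := h w v
  rw [hkey] at h2
  have h2' : A ≤ β * (Real.sqrt A * Real.sqrt (∑ q, ‖v q‖ ^ 2)) := by
    have hAn : ‖(A:ℂ)‖ = A := by rw [Complex.norm_real]; exact Real.norm_of_nonneg hA0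
    have h3 := h2; rw [hAn] at h3; exact h3
  have hs := Real.sq_sqrt hA0
  have hs2 := Real.sq_sqrt (Finset.sum_nonneg (fun q (_ : q ∈ Finset.univ) => sq_nonneg ‖v q‖))
  have hsn := Real.sqrt_nonneg A
  have hsn2 := Real.sqrt_nonneg (∑ q, ‖v q‖ ^ 2)
  nlinarith [sq_nonneg (Real.sqrt A - β * Real.sqrt (∑ q, ‖v q‖ ^ 2))]

lemma lift_scalar_bound {n : ℕ} (c : Fin n → Fin n → ℂ) (β : ℝ)
    (h : ∀ v : Fin n → ℂ, ∑ p, ‖∑ q, c p q * v q‖ ^ 2 ≤ β ^ 2 * ∑ q, ‖v q‖ ^ 2)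
    (ξ : Fin n → K) :
    ∑ p, ‖∑ q, c p q • ξ q‖ ^ 2 ≤ β ^ 2 * ∑ q, ‖ξ q‖ ^ 2 := by
  set V := Submodule.span ℂ (Set.range ξ) with hV
  haveI : FiniteDimensional ℂ V := FiniteDimensional.span_of_finite ℂ (Set.finite_range ξ)
  set e := stdOrthonormalBasis ℂ V
  set ξ' : Fin n → V := fun q => ⟨ξ q, Submodule.subset_span (Set.mem_range_self q)⟩ with hξ'
  set y : Fin n → EuclideanSpace ℂ (Fin (Module.finrank ℂ V)) := fun q => e.repr (ξ' q) with hy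
  have hnξ : ∀ q, ‖ξ q‖ = ‖y q‖ := by
    intro q
    rw [hy]
    simp only [LinearIsometryEquiv.norm_map]
    rfl
  have hsum : ∀ p, ‖∑ q, c p q • ξ q‖ = ‖∑ q, c p q • y q‖ := by
    intro p
    have : (∑ q, c p q • ξ q) = ((∑ q, c p q • ξ' q : V) : K) := by
      push_cast; rfl
    rw [this]
    rw [show ‖((∑ q, c p q • ξ' q : V) : K)‖ = ‖(∑ q, c p q • ξ' q : V)‖ from rfl]
    rw [← e.repr.norm_map]
    congr 1
    rw [map_sum]
    exact Finset.sum_congr rfl fun q _ => by rw [map_smul]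
  calc ∑ p, ‖∑ q, c p q • ξ q‖ ^ 2
      = ∑ p, ∑ j, ‖∑ q, c p q * (y q j)‖ ^ 2 := by
        refine Finset.sum_congr rfl fun p _ => ?_
        rw [hsum p, pilp_norm_sq]
        refine Finset.sum_congr rfl fun j _ => ?_
        rw [show (∑ q, c p q • y q) j = ∑ q, c p q * y q j from by simp [Finset.sum_apply]]
    _ = ∑ j, ∑ p, ‖∑ q, c p q * (y q j)‖ ^ 2 := Finset.sum_comm
    _ ≤ ∑ j, β ^ 2 * ∑ q, ‖y q j‖ ^ 2 := Finset.sum_le_sum fun j _ => h _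
    _ = β ^ 2 * ∑ q, ‖y q‖ ^ 2 := by
        rw [← Finset.mul_sum, Finset.sum_comm]
        congr 1
        exact Finset.sum_congr rfl fun q _ => (pilp_norm_sq (y q)).symm
    _ = β ^ 2 * ∑ q, ‖ξ q‖ ^ 2 := by
        congr 1; exact Finset.sum_congr rfl fun q _ => by rw [hnξ]

lemma rankone_matOp_le {n : ℕ} (c : Fin n → Fin n → ℂ) (a : K →L[ℂ] K) (β : ℝ) (hβ : 0 ≤ β)
    (h : ∀ v : Fin n → ℂ, ∑ p, ‖∑ q, c p q * v q‖ ^ 2 ≤ β ^ 2 * ∑ q, ‖v q‖ ^ 2)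
    (ξ : PiLp 2 fun _ : Fin n => K) :
    ‖matOp (Matrix.of fun p q => c p q • a) ξ‖ ≤ β * ‖a‖ * ‖ξ‖ := by
  have hsq : ‖matOp (Matrix.of fun p q => c p q • a) ξ‖ ^ 2 ≤ (β * ‖a‖ * ‖ξ‖) ^ 2 := by
    rw [pilp_norm_sq]
    have hcomp : ∀ p, matOp (Matrix.of fun p q => c p q • a) ξ p = a (∑ q, c p q • ξ q) := by
      intro p
      rw [matOp_apply, map_sum]
      exact Finset.sum_congr rfl fun q _ => by simp
    calc ∑ p, ‖matOp (Matrix.of fun p q => c p q • a) ξ p‖ ^ 2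
        = ∑ p, ‖a (∑ q, c p q • ξ q)‖ ^ 2 := by
          exact Finset.sum_congr rfl fun p _ => by rw [hcomp]
      _ ≤ ∑ p, (‖a‖ * ‖∑ q, c p q • ξ q‖) ^ 2 := by
          refine Finset.sum_le_sum fun p _ => ?_
          have := a.le_opNorm (∑ q, c p q • ξ q)
          exact pow_le_pow_left₀ (norm_nonneg _) this 2
      _ = ‖a‖ ^ 2 * ∑ p, ‖∑ q, c p q • ξ q‖ ^ 2 := by
          rw [Finset.mul_sum]; exact Finset.sum_congr rfl fun p _ => by ring
      _ ≤ ‖a‖ ^ 2 * (β ^ 2 * ∑ q, ‖ξ q‖ ^ 2) := by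
          refine mul_le_mul_of_nonneg_left ?_ (sq_nonneg _)
          exact lift_scalar_bound c β h (fun q => ξ q)
      _ = (β * ‖a‖ * ‖ξ‖) ^ 2 := by rw [← pilp_norm_sq]; ring
  have h2 : (0:ℝ) ≤ β * ‖a‖ * ‖ξ‖ := by positivity
  exact le_of_pow_le_pow_left₀ two_ne_zero h2 hsq

lemma norm_matOp_fin_one (M : Matrix (Fin 1) (Fin 1) (K →L[ℂ] K)) :
    ‖matOp M‖ = ‖M 0 0‖ := by
  have key : ∀ (ξ : PiLp 2 fun _ : Fin 1 => K), ‖matOp M ξ‖ = ‖M 0 0 (ξ 0)‖ := by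
    intro ξ
    rw [← Real.sqrt_sq (norm_nonneg (matOp M ξ)), ← Real.sqrt_sq (norm_nonneg (M 0 0 (ξ 0)))]
    congr 1
    rw [pilp_norm_sq]
    rw [Fin.sum_univ_one, matOp_apply, Fin.sum_univ_one]
  have hnξ : ∀ (ξ : PiLp 2 fun _ : Fin 1 => K), ‖ξ‖ = ‖ξ 0‖ := by
    intro ξ
    rw [← Real.sqrt_sq (norm_nonneg ξ), pilp_norm_sq, Fin.sum_univ_one,
      Real.sqrt_sq (norm_nonneg _)]
  refine le_antisymm ?_ ?_
  · refine ContinuousLinearMap.opNorm_le_bound _ (norm_nonneg (M 0 0)) fun ξ => ?_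
    rw [key, hnξ]
    exact (M 0 0).le_opNorm _
  · refine ContinuousLinearMap.opNorm_le_bound _ (norm_nonneg (matOp M)) fun w => ?_
    set ξ : PiLp 2 (fun _ : Fin 1 => K) := (WithLp.equiv 2 _).symm (fun _ => w) with hξ
    have h0 : ξ 0 = w := rfl
    calc ‖M 0 0 w‖ = ‖matOp M ξ‖ := by rw [key, h0]
      _ ≤ ‖matOp M‖ * ‖ξ‖ := (matOp M).le_opNorm ξ
      _ = ‖matOp M‖ * ‖w‖ := by rw [hnξ, h0]

lemma matOp_zero_apply {n : ℕ} (Z : Matrix (Fin n) (Fin n) (K →L[ℂ] K))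
    (hZ : ∀ p q, Z p q = 0) (ξ : PiLp 2 fun _ : Fin n => K) : matOp Z ξ = 0 := by
  refine PiLp.ext fun p => ?_
  rw [matOp_apply]
  simp [hZ]


lemma aux_perturb [CompleteSpace K]
    (B : StarSubalgebra ℂ (K →L[ℂ] K)) (C : ℝ) (hC : 0 ≤ C)
    (D : Submodule ℂ (K →L[ℂ] K))
    (hdense : (B : Set (K →L[ℂ] K)) ⊆ closure (D : Set (K →L[ℂ] K)))
    (T : (K →L[ℂ] K) →ₗ[ℂ] (K →L[ℂ] K))
    (hmaps : Set.MapsTo T (B : Set (K →L[ℂ] K)) (B : Set (K →L[ℂ] K)))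
    (hfd : FiniteDimensional ℂ (Submodule.span ℂ (T '' (B : Set (K →L[ℂ] K)))))
    (hcb : CBBoundOn (B : Set (K →L[ℂ] K)) T C)
    (ε : ℝ) (hε : 0 < ε) :
    ∃ ρ : (K →L[ℂ] K) →ₗ[ℂ] (K →L[ℂ] K),
      Set.MapsTo ρ (B : Set (K →L[ℂ] K)) (D : Set (K →L[ℂ] K)) ∧
      FiniteDimensional ℂ (Submodule.span ℂ (ρ '' (B : Set (K →L[ℂ] K)))) ∧
      CBBoundOn (B : Set (K →L[ℂ] K)) ρ (C + ε) ∧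
      (∀ x ∈ B, ‖ρ x - T x‖ ≤ ε * ‖x‖) := by
  classical
  set V : Submodule ℂ (K →L[ℂ] K) := Submodule.span ℂ (T '' (B : Set (K →L[ℂ] K))) with hVdef
  haveI : FiniteDimensional ℂ V := hfd
  have hVB : ∀ v : V, (v : K →L[ℂ] K) ∈ B := by
    intro v
    have hle : V ≤ Subalgebra.toSubmodule B.toSubalgebra := by
      rw [hVdef]
      refine Submodule.span_le.mpr ?_
      rintro _ ⟨x, hx, rfl⟩
      exact hmaps hx
    exact hle v.2
  set m := Module.finrank ℂ V with hm
  set b : Module.Basis (Fin m) ℂ V := Module.finBasis ℂ V with hb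
  set coordC : Fin m → (V →L[ℂ] ℂ) :=
    fun k => LinearMap.toContinuousLinearMap (b.coord k) with hcoordC
  set κ : Fin m → ℝ := fun k => ‖coordC k‖ * C with hκ
  have hκ0 : ∀ k, 0 ≤ κ k := fun k => mul_nonneg (ContinuousLinearMap.opNorm_nonneg _) hC
  -- norm bound for T on B
  have hT : ∀ x ∈ B, ‖T x‖ ≤ C * ‖x‖ := by
    intro x hx
    have h1 := hcb 1 (Matrix.of fun _ _ => x) (fun _ _ => hx)
    rw [norm_matOp_fin_one, norm_matOp_fin_one] at h1
    exact h1
  -- choose approximants in D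
  have hd : ∀ k : Fin m, ∃ d ∈ D, ‖d - (b k : K →L[ℂ] K)‖ < ε / (m * (κ k + 1)) := by
    intro k
    have hmem : ((b k : K →L[ℂ] K)) ∈ closure (D : Set (K →L[ℂ] K)) := hdense (hVB (b k))
    have hmpos : (0:ℝ) < m := by exact_mod_cast k.pos
    have hpos : 0 < ε / (m * (κ k + 1)) := by
      apply div_pos hε
      apply mul_pos hmpos
      linarith [hκ0 k]
    obtain ⟨d, hdD, hdist⟩ := Metric.mem_closure_iff.mp hmem _ hpos
    refine ⟨d, hdD, ?_⟩
    rwa [dist_comm, dist_eq_norm] at hdist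
  choose d hdD hdclose using hd
  set a : Fin m → (K →L[ℂ] K) := fun k => d k - (b k : K →L[ℂ] K) with hadef
  -- projection onto V and the perturbed map
  obtain ⟨W, hW⟩ := Submodule.exists_isCompl V
  set P : (K →L[ℂ] K) →ₗ[ℂ] V := V.linearProjOfIsCompl W hW with hP
  set L : V →ₗ[ℂ] (K →L[ℂ] K) := b.constr ℂ d with hL
  set ρ : (K →L[ℂ] K) →ₗ[ℂ] (K →L[ℂ] K) := L.comp (P.comp T) with hρdef
  set f : Fin m → ((K →L[ℂ] K) →ₗ[ℂ] ℂ) :=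
    fun k => (b.coord k).comp (P.comp T) with hf
  have hρ : ∀ x, ρ x = ∑ k, f k x • d k := by
    intro x
    simp only [hρdef, hf, LinearMap.comp_apply, hL]
    rw [Module.Basis.constr_apply_fintype]
    exact Finset.sum_congr rfl fun k _ => by rw [Module.Basis.equivFun_apply, Module.Basis.coord_apply]
  have hTx_mem : ∀ x ∈ B, T x ∈ V := fun x hx =>
    Submodule.subset_span ⟨x, hx, rfl⟩
  have hPT : ∀ x (hx : x ∈ B), P (T x) = (⟨T x, hTx_mem x hx⟩ : V) := by
    intro x hx
    exact Submodule.linearProjOfIsCompl_apply_left hW ⟨T x, hTx_mem x hx⟩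
  have hfx : ∀ x ∈ B, ∀ k, ‖f k x‖ ≤ κ k * ‖x‖ := by
    intro x hx k
    have h1 : f k x = coordC k (P (T x)) := rfl
    rw [h1]
    calc ‖coordC k (P (T x))‖ ≤ ‖coordC k‖ * ‖P (T x)‖ := (coordC k).le_opNorm _
      _ = ‖coordC k‖ * ‖T x‖ := by rw [hPT x hx]; rfl
      _ ≤ ‖coordC k‖ * (C * ‖x‖) :=
          mul_le_mul_of_nonneg_left (hT x hx) (ContinuousLinearMap.opNorm_nonneg _)
      _ = κ k * ‖x‖ := by rw [hκ]; ring
  have hTsum : ∀ x ∈ B, T x = ∑ k, f k x • ((b k : K →L[ℂ] K)) := by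
    intro x hx
    have h1 := b.sum_repr (P (T x))
    have h2 : T x = ((P (T x) : V) : K →L[ℂ] K) := by rw [hPT x hx]
    rw [h2, ← h1]
    push_cast
    exact Finset.sum_congr rfl fun k _ => rfl
  have hdiff : ∀ x ∈ B, ρ x - T x = ∑ k, f k x • a k := by
    intro x hx
    rw [hρ x, hTsum x hx, ← Finset.sum_sub_distrib]
    exact Finset.sum_congr rfl fun k _ => (smul_sub _ _ _).symm
  have hκa : ∀ k, κ k * ‖a k‖ ≤ ε / m := by
    intro k
    have hmpos : (0:ℝ) < m := by exact_mod_cast k.pos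
    have hκ1 : (0:ℝ) < κ k + 1 := by linarith [hκ0 k]
    calc κ k * ‖a k‖ ≤ κ k * (ε / (m * (κ k + 1))) :=
        mul_le_mul_of_nonneg_left (le_of_lt (hdclose k)) (hκ0 k)
      _ = (κ k / (κ k + 1)) * (ε / m) := by
          rw [mul_div_assoc', div_mul_div_comm, mul_comm (↑m : ℝ) (κ k + 1)]
      _ ≤ 1 * (ε / m) := by
          refine mul_le_mul_of_nonneg_right ?_ (le_of_lt (div_pos hε hmpos))
          rw [div_le_one hκ1]; linarith
      _ = ε / m := one_mul _
  have hκasum : ∑ k, κ k * ‖a k‖ ≤ ε := by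
    rcases Nat.eq_zero_or_pos m with hm0 | hmpos
    · rw [show (Finset.univ : Finset (Fin m)) = ∅ by
        simp [Finset.univ_eq_empty_iff, hm0.symm ▸ (inferInstance : IsEmpty (Fin 0))]]
      simpa using le_of_lt hε
    · calc ∑ k, κ k * ‖a k‖ ≤ ∑ _k : Fin m, ε / m :=
          Finset.sum_le_sum fun k _ => hκa k
        _ = m * (ε / m) := by rw [Finset.sum_const, Finset.card_univ, Fintype.card_fin]; simp
        _ = ε := by field_simp
  refine ⟨ρ, ?_, ?_, ?_, ?_⟩
  · -- MapsTo B D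
    intro x hx
    rw [SetLike.mem_coe]
    show ρ x ∈ D
    rw [hρ x]
    exact Submodule.sum_smul_mem D _ fun k _ => hdD k
  · -- finite rank
    haveI : FiniteDimensional ℂ (Submodule.span ℂ (Set.range d)) :=
      FiniteDimensional.span_of_finite ℂ (Set.finite_range d)
    refine Submodule.finiteDimensional_of_le (S₂ := Submodule.span ℂ (Set.range d)) ?_
    refine Submodule.span_le.mpr ?_
    rintro _ ⟨x, _, rfl⟩
    rw [hρ x]
    exact Submodule.sum_smul_mem _ _ fun k _ => Submodule.subset_span (Set.mem_range_self k)
  · -- CB bound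
    intro n M hM
    -- scalar bounds for the coordinate functionals
    have hck : ∀ k (v : Fin n → ℂ),
        ∑ p, ‖∑ q, f k (M p q) * v q‖ ^ 2 ≤ (κ k * ‖matOp M‖) ^ 2 * ∑ q, ‖v q‖ ^ 2 := by
      intro k
      refine scalar_bound _ _ (mul_nonneg (hκ0 k) (ContinuousLinearMap.opNorm_nonneg _)) ?_
      intro u v
      have hXmem : (∑ p, ∑ q, ((starRingEnd ℂ) (u p) * v q) • M p q) ∈ B :=
        sum_mem fun p _ => sum_mem fun q _ =>
          SMulMemClass.smul_mem _ (hM p q)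
      have heq : (∑ p, ∑ q, ((starRingEnd ℂ) (u p) * v q) * f k (M p q))
          = f k (∑ p, ∑ q, ((starRingEnd ℂ) (u p) * v q) • M p q) := by
        rw [map_sum]
        refine Finset.sum_congr rfl fun p _ => ?_
        rw [map_sum]
        refine Finset.sum_congr rfl fun q _ => ?_
        rw [map_smul, smul_eq_mul]
      rw [heq]
      calc ‖f k (∑ p, ∑ q, ((starRingEnd ℂ) (u p) * v q) • M p q)‖
          ≤ κ k * ‖∑ p, ∑ q, ((starRingEnd ℂ) (u p) * v q) • M p q‖ :=
            hfx _ hXmem k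
        _ ≤ κ k * (‖matOp M‖ * (Real.sqrt (∑ p, ‖u p‖ ^ 2) * Real.sqrt (∑ q, ‖v q‖ ^ 2))) :=
            mul_le_mul_of_nonneg_left (comb_norm_le M u v) (hκ0 k)
        _ = κ k * ‖matOp M‖ * (Real.sqrt (∑ p, ‖u p‖ ^ 2) * Real.sqrt (∑ q, ‖v q‖ ^ 2)) := by
            ring
    refine ContinuousLinearMap.opNorm_le_bound _
      (mul_nonneg (by linarith) (norm_nonneg (matOp M))) fun ξ => ?_
    have hdecomp : matOp (M.map ρ) ξ = matOp (M.map T) ξ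
        + ∑ k, matOp (Matrix.of fun p q => f k (M p q) • a k) ξ := by
      refine PiLp.ext fun p => ?_
      have hLHS : matOp (M.map ρ) ξ p
          = ∑ q, T (M p q) (ξ q) + ∑ k, ∑ q, (f k (M p q) • a k) (ξ q) := by
        rw [matOp_apply]
        have : ∀ q, (M.map ρ) p q (ξ q)
            = T (M p q) (ξ q) + ∑ k, (f k (M p q) • a k) (ξ q) := by
          intro q
          have hx : ρ (M p q) = T (M p q) + ∑ k, f k (M p q) • a k := by
            have := hdiff (M p q) (hM p q)
            linear_combination (norm := module) this
          rw [show (M.map ρ) p q = ρ (M p q) from rfl, hx]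
          simp [ContinuousLinearMap.sum_apply]
        rw [Finset.sum_congr rfl fun q _ => this q, Finset.sum_add_distrib]
        rw [Finset.sum_comm]
      have hRHS : (matOp (M.map T) ξ
          + ∑ k, matOp (Matrix.of fun p q => f k (M p q) • a k) ξ) p
          = ∑ q, T (M p q) (ξ q) + ∑ k, ∑ q, (f k (M p q) • a k) (ξ q) := by
        have h1 : (matOp (M.map T) ξ
            + ∑ k, matOp (Matrix.of fun p q => f k (M p q) • a k) ξ) p
            = matOp (M.map T) ξ p
              + (∑ k, matOp (Matrix.of fun p q => f k (M p q) • a k) ξ) p := rfl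
        rw [h1, matOp_apply,
          show (∑ k, matOp (Matrix.of fun p q => f k (M p q) • a k) ξ) p
            = ∑ k, matOp (Matrix.of fun p q => f k (M p q) • a k) ξ p from
            by simp [Finset.sum_apply]]
        congr 1
        exact Finset.sum_congr rfl fun k _ => by rw [matOp_apply]; rfl
      rw [hLHS, hRHS]
    calc ‖matOp (M.map ρ) ξ‖
        ≤ ‖matOp (M.map T) ξ‖
          + ∑ k, ‖matOp (Matrix.of fun p q => f k (M p q) • a k) ξ‖ := by
          rw [hdecomp]
          exact (norm_add_le _ _).trans (by gcongr; exact norm_sum_le _ _)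
      _ ≤ C * ‖matOp M‖ * ‖ξ‖ + ∑ k, κ k * ‖matOp M‖ * ‖a k‖ * ‖ξ‖ := by
          gcongr with k _
          · calc ‖matOp (M.map T) ξ‖ ≤ ‖matOp (M.map T)‖ * ‖ξ‖ :=
                (matOp (M.map T)).le_opNorm ξ
              _ ≤ C * ‖matOp M‖ * ‖ξ‖ :=
                mul_le_mul_of_nonneg_right (hcb n M hM) (norm_nonneg ξ)
          · exact rankone_matOp_le (fun p q => f k (M p q)) (a k) (κ k * ‖matOp M‖)
              (mul_nonneg (hκ0 k) (ContinuousLinearMap.opNorm_nonneg _)) (hck k) ξ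
      _ ≤ C * ‖matOp M‖ * ‖ξ‖ + ε * ‖matOp M‖ * ‖ξ‖ := by
          have : ∑ k, κ k * ‖matOp M‖ * ‖a k‖ * ‖ξ‖
              = (∑ k, κ k * ‖a k‖) * (‖matOp M‖ * ‖ξ‖) := by
            rw [Finset.sum_mul]
            exact Finset.sum_congr rfl fun k _ => by ring
          rw [this]
          have := mul_le_mul_of_nonneg_right hκasum
            (mul_nonneg (norm_nonneg (matOp M)) (norm_nonneg ξ))
          linarith
      _ = (C + ε) * ‖matOp M‖ * ‖ξ‖ := by ring
  · -- pointwise closeness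
    intro x hx
    rw [hdiff x hx]
    calc ‖∑ k, f k x • a k‖ ≤ ∑ k, ‖f k x • a k‖ := norm_sum_le _ _
      _ ≤ ∑ k, κ k * ‖a k‖ * ‖x‖ := by
          refine Finset.sum_le_sum fun k _ => ?_
          rw [norm_smul]
          calc ‖f k x‖ * ‖a k‖ ≤ (κ k * ‖x‖) * ‖a k‖ :=
              mul_le_mul_of_nonneg_right (hfx x hx k) (norm_nonneg _)
            _ = κ k * ‖a k‖ * ‖x‖ := by ring
      _ = (∑ k, κ k * ‖a k‖) * ‖x‖ := by
          rw [Finset.sum_mul]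
      _ ≤ ε * ‖x‖ := mul_le_mul_of_nonneg_right hκasum (norm_nonneg x)


end Helpers

end CP

open CP

/-- If a C*-algebra `B` has the CBAP with constant ≤ `C` and `D` is a
norm-dense linear subspace of `B`, then the approximating net can be chosen with ranges
contained in `D`. -/
theorem CBAP_with_ranges_in_dense_subspace
    (K : Type*) [NormedAddCommGroup K] [InnerProductSpace ℂ K] [CompleteSpace K]
    (B : StarSubalgebra ℂ (K →L[ℂ] K)) (hB : IsClosed (B : Set (K →L[ℂ] K)))
    (C : ℝ) (hC : 0 ≤ C)
    (hcbap : CBAPWith (B : Set (K →L[ℂ] K)) C)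
    (D : Submodule ℂ (K →L[ℂ] K))
    (hDB : (D : Set (K →L[ℂ] K)) ⊆ (B : Set (K →L[ℂ] K)))
    (hdense : (B : Set (K →L[ℂ] K)) ⊆ closure (D : Set (K →L[ℂ] K))) :
    ∃ (ι : Type) (pι : Preorder ι), Nonempty ι ∧
      (∀ i j : ι, ∃ k, pι.le i k ∧ pι.le j k) ∧
      ∃ ρ : ι → ((K →L[ℂ] K) →ₗ[ℂ] (K →L[ℂ] K)),
        (∀ i, Set.MapsTo (ρ i) (B : Set (K →L[ℂ] K)) (D : Set (K →L[ℂ] K))) ∧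
        (∀ i, FiniteDimensional ℂ (Submodule.span ℂ (ρ i '' (B : Set (K →L[ℂ] K))))) ∧
        (∀ i, CBBoundOn (B : Set (K →L[ℂ] K)) (ρ i) C) ∧
        (∀ x ∈ B, Filter.Tendsto (fun i => ρ i x) (@Filter.atTop ι pι) (nhds x)) := by
  classical
  obtain ⟨ι, pι, hne, hdir, T, hTmaps, hTfd, hTcb, hTconv⟩ := hcbap
  letI := pι
  haveI := hne
  haveI hdι : IsDirected ι (· ≤ ·) := ⟨hdir⟩
  rcases eq_or_lt_of_le hC with hC0 | hCpos
  · -- C = 0 : B is trivial, take the zero net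
    have hzero : ∀ x ∈ B, x = (0 : K →L[ℂ] K) := by
      intro x hx
      have h0 : ∀ i, T i x = 0 := by
        intro i
        have h1 := hTcb i 1 (Matrix.of fun _ _ => x) (fun _ _ => hx)
        rw [norm_matOp_fin_one, norm_matOp_fin_one] at h1
        have h2 : ‖T i x‖ ≤ 0 := by
          have h1' : ‖T i x‖ ≤ C * ‖x‖ := h1
          rw [← hC0] at h1'
          simpa using h1'
        simpa using le_antisymm h2 (norm_nonneg _)
      have hconv := hTconv x hx
      have hconv0 : Filter.Tendsto (fun _ : ι => (0 : K →L[ℂ] K)) Filter.atTop (nhds x) := by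
        have : (fun i => T i x) = fun _ : ι => (0 : K →L[ℂ] K) := funext h0
        rwa [this] at hconv
      exact (tendsto_nhds_unique hconv0 tendsto_const_nhds)
    refine ⟨ι, pι, hne, hdir, fun _ => 0, ?_, ?_, ?_, ?_⟩
    · intro i x hx
      show (0 : (K →L[ℂ] K) →ₗ[ℂ] (K →L[ℂ] K)) x ∈ (D : Set (K →L[ℂ] K))
      simpa using D.zero_mem
    · intro i
      have hle : Submodule.span ℂ ((0 : (K →L[ℂ] K) →ₗ[ℂ] (K →L[ℂ] K)) ''
          (B : Set (K →L[ℂ] K))) ≤ (⊥ : Submodule ℂ (K →L[ℂ] K)) := by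
        refine Submodule.span_le.mpr ?_
        rintro _ ⟨x, _, rfl⟩
        simp
      exact Submodule.finiteDimensional_of_le hle
    · intro i n M hM
      refine ContinuousLinearMap.opNorm_le_bound _
        (mul_nonneg hC (ContinuousLinearMap.opNorm_nonneg _)) fun ξ => ?_
      have hz : matOp (M.map (0 : (K →L[ℂ] K) →ₗ[ℂ] (K →L[ℂ] K))) ξ = 0 :=
        matOp_zero_apply _ (fun p q => rfl) ξ
      rw [hz]
      simp only [norm_zero]
      positivity
    · intro x hx
      have hx0 := hzero x hx
      rw [hx0]
      simpa using (tendsto_const_nhds :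
        Filter.Tendsto (fun _ : ι => (0 : K →L[ℂ] K)) Filter.atTop (nhds 0))
  · -- C > 0
    choose σ hσ1 hσ2 hσ3 hσ4 using fun j : ι × ℕ =>
      aux_perturb B C hC D hdense (T j.1) (hTmaps j.1) (hTfd j.1) (hTcb j.1)
        (1 / (j.2 + 1)) (by positivity)
    set ε : ι × ℕ → ℝ := fun j => 1 / (j.2 + 1) with hεdef
    have hεpos : ∀ j, 0 < ε j := fun j => by positivity
    set s : ι × ℕ → ℝ := fun j => C / (C + ε j) with hsdef
    have hCε : ∀ j, 0 < C + ε j := fun j => by have := hεpos j; linarith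
    have hs0 : ∀ j, 0 ≤ s j := fun j => le_of_lt (div_pos hCpos (hCε j))
    have hs1 : ∀ j, s j ≤ 1 := fun j => by
      rw [hsdef, div_le_one (hCε j)]; linarith [hεpos j]
    have hsC : ∀ j, s j * (C + ε j) = C := fun j => div_mul_cancel₀ C (ne_of_gt (hCε j))
    set ρ : ι × ℕ → ((K →L[ℂ] K) →ₗ[ℂ] (K →L[ℂ] K)) :=
      fun j => ((s j : ℂ)) • σ j with hρdef
    have hnorms : ∀ j, ‖((s j : ℂ))‖ = s j := fun j => by
      rw [Complex.norm_real]; exact Real.norm_of_nonneg (hs0 j)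
    haveI : IsDirected (ι × ℕ) (· ≤ ·) := ⟨by
      rintro ⟨i, n⟩ ⟨i', n'⟩
      obtain ⟨k, hik, hi'k⟩ := hdir i i'
      exact ⟨(k, max n n'), ⟨hik, le_max_left _ _⟩, ⟨hi'k, le_max_right _ _⟩⟩⟩
    refine ⟨ι × ℕ, inferInstance, inferInstance, fun a b => directed_of (· ≤ ·) a b, ρ,
      ?_, ?_, ?_, ?_⟩
    · intro j x hx
      show ρ j x ∈ (D : Set (K →L[ℂ] K))
      rw [hρdef]
      exact D.smul_mem _ (hσ1 j hx)
    · intro j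
      haveI := hσ2 j
      have hle : Submodule.span ℂ (ρ j '' (B : Set (K →L[ℂ] K))) ≤
          Submodule.span ℂ (σ j '' (B : Set (K →L[ℂ] K))) := by
        refine Submodule.span_le.mpr ?_
        rintro _ ⟨x, hx, rfl⟩
        have : ρ j x = (s j : ℂ) • σ j x := rfl
        rw [this]
        exact Submodule.smul_mem _ _ (Submodule.subset_span ⟨x, hx, rfl⟩)
      exact Submodule.finiteDimensional_of_le hle
    · intro j n M hM
      refine ContinuousLinearMap.opNorm_le_bound _
        (mul_nonneg hC (ContinuousLinearMap.opNorm_nonneg _)) fun ξ => ?_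
      have hsc : matOp (M.map (ρ j)) ξ = (s j : ℂ) • (matOp (M.map (σ j)) ξ) := by
        refine PiLp.ext fun p => ?_
        rw [show ((s j : ℂ) • (matOp (M.map (σ j)) ξ)) p
            = (s j : ℂ) • (matOp (M.map (σ j)) ξ p) from rfl]
        rw [matOp_apply, matOp_apply, Finset.smul_sum]
        refine Finset.sum_congr rfl fun q _ => ?_
        rw [show (M.map (ρ j)) p q = (s j : ℂ) • (σ j) (M p q) from rfl]
        rfl
      calc ‖matOp (M.map (ρ j)) ξ‖ = s j * ‖matOp (M.map (σ j)) ξ‖ := by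
            rw [hsc, norm_smul, hnorms]
        _ ≤ s j * (((C + ε j) * ‖matOp M‖) * ‖ξ‖) := by
            refine mul_le_mul_of_nonneg_left ?_ (hs0 j)
            calc ‖matOp (M.map (σ j)) ξ‖ ≤ ‖matOp (M.map (σ j))‖ * ‖ξ‖ :=
                (matOp (M.map (σ j))).le_opNorm ξ
              _ ≤ ((C + ε j) * ‖matOp M‖) * ‖ξ‖ :=
                mul_le_mul_of_nonneg_right (hσ3 j n M hM) (norm_nonneg ξ)
        _ = (s j * (C + ε j)) * ‖matOp M‖ * ‖ξ‖ := by ring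
        _ = C * ‖matOp M‖ * ‖ξ‖ := by rw [hsC]
    · intro x hx
      rw [Metric.tendsto_nhds]
      intro δ hδ
      set A : ℝ := ‖x‖ + ‖x‖ / C with hA
      have hA0 : 0 ≤ A := by
        have : 0 ≤ ‖x‖ / C := div_nonneg (norm_nonneg x) hC
        simp only [hA]; linarith [norm_nonneg x]
      obtain ⟨n₀, hn₀⟩ := exists_nat_gt (A / (δ / 2))
      have hTev : ∀ᶠ i in (Filter.atTop : Filter ι), dist (T i x) x < δ / 2 :=
        (hTconv x hx) (Metric.ball_mem_nhds x (by linarith))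
      obtain ⟨i₀, hi₀⟩ := Filter.eventually_atTop.mp hTev
      rw [Filter.eventually_atTop]
      refine ⟨(i₀, n₀), ?_⟩
      rintro ⟨i, n⟩ ⟨hi, hn⟩
      have hεn_le : ε (i, n) ≤ 1 / ((n₀ : ℝ) + 1) := by
        have hcast : ((n₀:ℝ) + 1) ≤ ((n:ℝ) + 1) := by
          have : (n₀:ℝ) ≤ (n:ℝ) := Nat.cast_le.mpr hn
          linarith
        exact one_div_le_one_div_of_le (by positivity) hcast
      have hεA : ε (i, n) * A < δ / 2 := by
        have hd2 : (0:ℝ) < δ / 2 := by linarith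
        have hA2 : A < δ / 2 * ((n₀:ℝ) + 1) := by
          have h3 := (div_lt_iff₀ hd2).mp hn₀
          nlinarith
        calc ε (i, n) * A ≤ 1 / ((n₀:ℝ) + 1) * A :=
            mul_le_mul_of_nonneg_right hεn_le hA0
          _ < δ / 2 := by
            rw [one_div_mul_eq_div, div_lt_iff₀ (by positivity : (0:ℝ) < (n₀:ℝ) + 1)]
            linarith
      have h1 : ‖σ (i, n) x - T i x‖ ≤ ε (i, n) * ‖x‖ := hσ4 (i, n) x hx
      have hs1' := hs1 (i, n)
      have hs0' := hs0 (i, n)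
      have hε' := hεpos (i, n)
      have hnorm1s : ‖((s (i, n) : ℂ)) - 1‖ = 1 - s (i, n) := by
        have he : ((s (i, n) : ℂ)) - 1 = ((s (i, n) - 1 : ℝ) : ℂ) := by push_cast; ring
        rw [he, Complex.norm_real, Real.norm_eq_abs, abs_of_nonpos (by linarith)]
        ring
      have h1ms : 1 - s (i, n) = ε (i, n) / (C + ε (i, n)) := by
        rw [hsdef]
        field_simp
        ring
      have h1ms' : 1 - s (i, n) ≤ ε (i, n) / C := by
        rw [h1ms]
        gcongr
        linarith
      have hkey : ρ (i, n) x - x = ((s (i, n) : ℂ)) • (σ (i, n) x - T i x)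
          + ((s (i, n) : ℂ)) • (T i x - x) + (((s (i, n) : ℂ)) - 1) • x := by
        show ((s (i, n) : ℂ)) • σ (i, n) x - x = _
        module
      have hd : ‖T i x - x‖ < δ / 2 := by
        have := hi₀ i hi
        rwa [dist_eq_norm] at this
      rw [dist_eq_norm]
      calc ‖ρ (i, n) x - x‖
          = ‖((s (i, n) : ℂ)) • (σ (i, n) x - T i x)
            + ((s (i, n) : ℂ)) • (T i x - x) + (((s (i, n) : ℂ)) - 1) • x‖ := by rw [hkey]
        _ ≤ ‖((s (i, n) : ℂ)) • (σ (i, n) x - T i x)‖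
            + ‖((s (i, n) : ℂ)) • (T i x - x)‖ + ‖(((s (i, n) : ℂ)) - 1) • x‖ :=
            norm_add₃_le
        _ = s (i, n) * ‖σ (i, n) x - T i x‖ + s (i, n) * ‖T i x - x‖
            + (1 - s (i, n)) * ‖x‖ := by
            rw [norm_smul, norm_smul, norm_smul, hnorms, hnorm1s]
        _ ≤ ε (i, n) * ‖x‖ + ‖T i x - x‖ + (ε (i, n) / C) * ‖x‖ := by
            have e1 : s (i, n) * ‖σ (i, n) x - T i x‖ ≤ ε (i, n) * ‖x‖ := by
              calc s (i, n) * ‖σ (i, n) x - T i x‖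
                  ≤ 1 * (ε (i, n) * ‖x‖) := by
                    apply mul_le_mul hs1' h1 (norm_nonneg _) zero_le_one
                _ = ε (i, n) * ‖x‖ := one_mul _
            have e2 : s (i, n) * ‖T i x - x‖ ≤ ‖T i x - x‖ :=
              mul_le_of_le_one_left (norm_nonneg _) hs1'
            have e3 : (1 - s (i, n)) * ‖x‖ ≤ (ε (i, n) / C) * ‖x‖ :=
              mul_le_mul_of_nonneg_right h1ms' (norm_nonneg x)
            linarith
        _ < δ := by
            have heq : ε (i, n) * ‖x‖ + (ε (i, n) / C) * ‖x‖ = ε (i, n) * A := by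
              rw [hA]; ring
            linarith
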